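/- Let S be a semigroup that satisfies Property (C₃), and let u be a word in which each variable forms exactly one island, i.e. u = x₁^{p₁}x₂^{p₂}⋯x_r^{p_r} for pairwise distinct variables x₁,…,x_r and positive exponents p₁,…,p_r. Then for every word v, if S satisfies u ≈ v then v is of the same type as u. -/

import Mathlib

/-- The alphabet of variables. -/
abbrev Var := ℕ

/-- Words are (possibly empty) lists of variables; elements of the free
semigroup `𝔄⁺` are the nonempty ones. -/
abbrev Word := List Var

/-- Two words are of the same type if they agree after collapsing each
maximal constant run (island) to a single letter. -/
def sameType (u v : Word) : Prop :=
  u.destutter (· ≠ ·) = v.destutter (· ≠ ·)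

/-- The number of islands of a word. -/
def height (u : Word) : ℕ := (u.destutter (· ≠ ·)).length

/-- The set of variables occurring in a word. -/
def con (u : Word) : Set Var := {x | x ∈ u}

/-- `del u X` is the word obtained from `u` by deleting all occurrences of all
variables not in the list `X`; i.e. `u(x₁,…,x_k)` for `X = [x₁,…,x_k]`. -/
def del (u : Word) (X : List Var) : Word := u.filter (· ∈ X)

/-- The set of linear variables of `u` (occurring exactly once). -/
def lin (u : Word) : Set Var := {x | u.count x = 1}

/-- The set of non-linear variables of `u` (occurring at least twice). -/
def nonlin (u : Word) : Set Var := {x | 2 ≤ u.count x}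

/-- The set of variables occurring exactly twice in `u`. -/
def con2 (u : Word) : Set Var := {x | u.count x = 2}

/-- The set of variables occurring at least three times in `u`. -/
def conGt2 (u : Word) : Set Var := {x | 3 ≤ u.count x}

/-- Applying a substitution `Θ : 𝔄 → 𝔄⁺` to a word, as the extension of `Θ`
to a homomorphism. -/
def subst (Θ : Var → Word) (u : Word) : Word := u.flatMap Θ

/-- `w` is a power (with positive exponent) of the variable `c`. -/
def isPowerOf (w : Word) (c : Var) : Prop := ∃ k : ℕ, 0 < k ∧ w = List.replicate k c

/-- A monoid `M` satisfies the identity `u ≈ v` if every monoid homomorphism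
from the free monoid `𝔄*` to `M` (equivalently, the extension of every map
`φ : 𝔄 → M`) identifies `u` and `v`. -/
def MSat (M : Type) [Monoid M] (u v : Word) : Prop :=
  ∀ φ : Var → M, (u.map φ).prod = (v.map φ).prod

/-- Evaluation of a nonempty word in a semigroup under `φ : 𝔄 → S`
(the empty word evaluates to `none`). -/
def evalS {S : Type} [Semigroup S] (φ : Var → S) : Word → Option S
  | [] => none
  | a :: t => some ((t.map φ).foldl (· * ·) (φ a))

/-- A semigroup `S` satisfies the identity `u ≈ v` between nonempty words if
every semigroup homomorphism from the free semigroup `𝔄⁺` to `S` identifies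
`u` and `v`. -/
def SSat (S : Type) [Semigroup S] (u v : Word) : Prop :=
  ∀ φ : Var → S, evalS φ u = evalS φ v

/-- Property (C_ℓ) for a monoid: every word in two variables of height at most
`ℓ` can form an identity of `M` only with a word of the same type. -/
def MPropC (M : Type) [Monoid M] (ℓ : ℕ) : Prop :=
  ∀ x y : Var, x ≠ y → ∀ u : Word, u ≠ [] → (∀ c ∈ u, c = x ∨ c = y) →
    height u ≤ ℓ → ∀ v : Word, MSat M u v → sameType u v

/-- Property (C_ℓ) for a semigroup. -/
def SPropC (S : Type) [Semigroup S] (ℓ : ℕ) : Prop :=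
  ∀ x y : Var, x ≠ y → ∀ u : Word, u ≠ [] → (∀ c ∈ u, c = x ∨ c = y) →
    height u ≤ ℓ → ∀ v : Word, SSat S u v → sameType u v

/-- A monoid is finitely based if some finite set of identities it satisfies
entails all its identities (in every monoid). -/
def MonoidFB (M : Type) [Monoid M] : Prop :=
  ∃ Sig : Finset (Word × Word),
    (∀ p ∈ Sig, MSat M p.1 p.2) ∧
    ∀ (N : Type) [Monoid N], (∀ p ∈ Sig, MSat N p.1 p.2) →
      ∀ u v : Word, MSat M u v → MSat N u v

/-- A semigroup is finitely based if some finite set of identities (between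
nonempty words) it satisfies entails all its identities (in every semigroup). -/
def SemigroupFB (S : Type) [Semigroup S] : Prop :=
  ∃ Sig : Finset (Word × Word),
    (∀ p ∈ Sig, p.1 ≠ [] ∧ p.2 ≠ [] ∧ SSat S p.1 p.2) ∧
    ∀ (T : Type) [Semigroup T], (∀ p ∈ Sig, SSat T p.1 p.2) →
      ∀ u v : Word, u ≠ [] → v ≠ [] → SSat S u v → SSat T u v

/-- `B` is a block of `u` occurring as `u = p ++ B ++ s`: it contains no linear
variables of `u` and is maximal with this property. -/
def IsBlockAt (u p B s : Word) : Prop :=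
  u = p ++ B ++ s ∧ (∀ c ∈ B, c ∉ lin u) ∧
  (∀ c : Var, p.getLast? = some c → c ∈ lin u) ∧
  (∀ c : Var, s.head? = some c → c ∈ lin u)

/-- The word `Uₙ = (x₁⋯xₙ)(xₙ⋯x₁)(x₁⋯xₙ)`. -/
def Uword (n : ℕ) (x : Fin n → Var) : Word :=
  List.ofFn x ++ (List.ofFn x).reverse ++ List.ofFn x

/-- The word `Vₙ = (x₁⋯xₙ)(x₁²x₂²⋯xₙ²)`. -/
def Vword (n : ℕ) (x : Fin n → Var) : Word :=
  List.ofFn x ++ (List.ofFn x).flatMap (fun c => [c, c])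

/-!
Renaming variables preserves the identities of `S`. Send the letters of a word `s` to the
variable `1` and all other variables to `0`: if `s` is a segment of `x₁ ⋯ x_r`, the image of
`u = x₁^{p₁} ⋯ x_r^{p_r}` has height at most 3, so by (C₃) the image of `v` has the same type.
Taking `s` a single letter or all of `x₁ ⋯ x_r` shows that `v` contains exactly the letters
`x₁, …, x_r`; taking `s = x₁ ⋯ x_k` shows that no `xⱼ` with `j > k` occurs in `v` before an `xᵢ`
with `i ≤ k`. Hence `v = x₁^{q₁} ⋯ x_r^{q_r}` with all `qᵢ > 0`.
-/

namespace List

variable {α β : Type*}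

theorem exists_destutter'_eq_cons (R : α → α → Prop) [DecidableRel R] (a : α) (l : List α) :
    ∃ t, l.destutter' R a = a :: t := by
  induction l with
  | nil => exact ⟨[], rfl⟩
  | cons b l ih =>
    rw [destutter'_cons]
    split_ifs
    exacts [⟨_, rfl⟩, ih]

theorem Nodup.pairwise_idxOf_lt [BEq α] [LawfulBEq α] {l : List α} (h : l.Nodup) :
    l.Pairwise fun a b => l.idxOf a < l.idxOf b :=
  pairwise_iff_getElem.mpr fun i j hi hj hij => by
    rwa [h.idxOf_getElem, h.idxOf_getElem]

variable [DecidableEq α]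

theorem destutter_cons_destutter (a : α) (l : List α) :
    (a :: l.destutter (· ≠ ·)).destutter (· ≠ ·) = (a :: l).destutter (· ≠ ·) := by
  cases l with
  | nil => rfl
  | cons b l =>
    obtain ⟨t, ht⟩ := exists_destutter'_eq_cons (· ≠ ·) b l
    have hchain : (b :: t).IsChain (· ≠ ·) := ht ▸ isChain_destutter' _ _ _
    simp only [destutter_cons', ht, destutter'_cons]
    by_cases hab : a = b
    · subst hab
      simp [destutter'_of_isChain_cons _ _ hchain, ht]
    · simp [hab, destutter'_of_isChain_cons _ _ hchain]

theorem destutter_map_destutter' [DecidableEq β] (f : α → β) (a : α) (l : List α) :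
    ((l.destutter' (· ≠ ·) a).map f).destutter (· ≠ ·) = ((a :: l).map f).destutter (· ≠ ·) := by
  induction l generalizing a with
  | nil => rfl
  | cons b l ih =>
    by_cases hab : a = b
    · subst hab
      rw [destutter'_cons_neg _ (by simp), ih, map_cons, map_cons, map_cons, destutter_cons_cons,
        if_neg (by simp), destutter_cons']
    · rw [destutter'_cons_pos _ hab, map_cons, ← destutter_cons_destutter, ih, map_cons,
        destutter_cons_destutter, map_cons, map_cons]

theorem destutter_map_destutter [DecidableEq β] (f : α → β) (l : List α) :
    ((l.destutter (· ≠ ·)).map f).destutter (· ≠ ·) = (l.map f).destutter (· ≠ ·) := by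
  cases l with
  | nil => rfl
  | cons a l => exact destutter_map_destutter' f a l

theorem IsChain.sublist_destutter' {s l : List α} {a : α} (hs : s.IsChain (· ≠ ·))
    (h : s <+ a :: l) : s <+ l.destutter' (· ≠ ·) a := by
  induction l generalizing a s with
  | nil => simpa using h
  | cons b l ih =>
    by_cases hab : a = b
    · subst hab
      rw [destutter'_cons_neg _ (by simp)]
      refine ih hs ?_
      cases h with
      | cons _ h => exact h
      | cons_cons _ h =>
        cases h with
        | cons _ h => exact h.cons_cons a
        | cons_cons _ h => simp at hs
    · rw [destutter'_cons_pos _ hab]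
      cases h with
      | cons _ h => exact (ih hs h).cons a
      | cons_cons _ h => exact (ih hs.tail h).cons_cons a

theorem IsChain.sublist_destutter {s l : List α} (hs : s.IsChain (· ≠ ·)) (h : s <+ l) :
    s <+ l.destutter (· ≠ ·) := by
  cases l with
  | nil => simpa using h
  | cons a l => exact hs.sublist_destutter' h

theorem destutter_replicate_append (a : α) (k : ℕ) (l : List α) :
    (replicate (k + 1) a ++ l).destutter (· ≠ ·) = (a :: l).destutter (· ≠ ·) := by
  induction k with
  | zero => rfl
  | succ k ih =>
    rw [replicate_succ, cons_append, ← ih, replicate_succ, cons_append, destutter_cons_cons,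
      if_neg (by simp), destutter_cons']

theorem destutter_flatMap_replicate {L : List (α × ℕ)} (hL : (L.map Prod.fst).IsChain (· ≠ ·))
    (hpos : ∀ q ∈ L, 0 < q.2) :
    (L.flatMap fun q => replicate q.2 q.1).destutter (· ≠ ·) = L.map Prod.fst := by
  induction L with
  | nil => rfl
  | cons q L ih =>
    obtain ⟨a, k⟩ := q
    obtain ⟨k, rfl⟩ := Nat.exists_eq_succ_of_ne_zero (hpos _ mem_cons_self).ne'
    rw [flatMap_cons, destutter_replicate_append, ← destutter_cons_destutter,
      ih hL.tail fun q hq => hpos q (mem_cons_of_mem _ hq)]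
    exact destutter_of_isChain _ _ hL

theorem length_destutter_append_le (l₁ l₂ : List α) :
    ((l₁ ++ l₂).destutter (· ≠ ·)).length
      ≤ (l₁.destutter (· ≠ ·)).length + (l₂.destutter (· ≠ ·)).length := by
  cases l₁ with
  | nil => simp
  | cons a l₁ =>
    simp only [cons_append, destutter_cons']
    induction l₁ generalizing a with
    | nil =>
      cases l₂ with
      | nil => simp
      | cons b l₂ =>
        rw [nil_append, destutter_cons', destutter'_cons]
        split_ifs with hab
        · simp
        · simp [not_not.mp hab]
    | cons b l₁ ih =>
      rw [cons_append, destutter'_cons, destutter'_cons]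
      split_ifs
      · simp only [length_cons]
        have := ih b
        omega
      · exact ih a

theorem length_destutter_le_one {l : List α} {a : α} (h : ∀ b ∈ l, b = a) :
    (l.destutter (· ≠ ·)).length ≤ 1 := by
  have hmem : ∀ b ∈ l.destutter (· ≠ ·), b = a := fun b hb =>
    h b ((destutter_sublist _ l).subset hb)
  match hd : l.destutter (· ≠ ·), isChain_destutter (· ≠ ·) l, hmem with
  | [], _, _ => simp
  | [_], _, _ => simp
  | b :: c :: _, hc, hm =>
    exact absurd ((hm b (by simp)).trans (hm c (by simp)).symm) (isChain_cons_cons.mp hc).1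

end List

open List

theorem sameType.symm {u v : Word} (h : sameType u v) : sameType v u := Eq.symm h

theorem sameType.trans {u v w : Word} (h₁ : sameType u v) (h₂ : sameType v w) : sameType u w :=
  Eq.trans h₁ h₂

theorem sameType.height_eq {u v : Word} (h : sameType u v) : height u = height v :=
  congrArg length h

theorem sameType.map {u v : Word} (h : sameType u v) (f : Var → Var) :
    sameType (u.map f) (v.map f) := by
  unfold sameType at h ⊢
  rw [← destutter_map_destutter, h, destutter_map_destutter]

theorem sameType.sublist_of_isChain {u v s : Word} (h : sameType u v) (hs : s.IsChain (· ≠ ·))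
    (hsu : s <+ u) : s <+ v :=
  (h ▸ hs.sublist_destutter hsu).trans (destutter_sublist _ v)

theorem sameType.mem {u v : Word} (h : sameType u v) {c : Var} (hc : c ∈ u) : c ∈ v :=
  singleton_sublist.mp (h.sublist_of_isChain (isChain_singleton c) (singleton_sublist.mpr hc))

theorem evalS_map {S : Type} [Semigroup S] (φ : Var → S) (f : Var → Var) (w : Word) :
    evalS φ (w.map f) = evalS (φ ∘ f) w := by
  cases w <;> simp [evalS, map_map]

theorem SSat.map {S : Type} [Semigroup S] {u v : Word} (h : SSat S u v) (f : Var → Var) :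
    SSat S (u.map f) (v.map f) := fun φ => by
  rw [evalS_map, evalS_map]
  exact h (φ ∘ f)

theorem SPropC.sameType_map {S : Type} [Semigroup S] {ℓ : ℕ} (hC : SPropC S ℓ) {u v : Word}
    (h : SSat S u v) (hu : u ≠ []) {f : Var → Var} {x y : Var} (hxy : x ≠ y)
    (hf : ∀ c, f c = x ∨ f c = y) (hℓ : height (u.map f) ≤ ℓ) :
    sameType (u.map f) (v.map f) :=
  hC x y hxy _ (by simpa using hu) (by simpa using fun c _ => hf c) hℓ _ (h.map f)

theorem sameType_flatten_ofFn_replicate {r : ℕ} {x : Fin r → Var} {p : Fin r → ℕ}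
    (hx : (ofFn x).IsChain (· ≠ ·)) (hp : ∀ i, 0 < p i) :
    sameType (ofFn fun i => replicate (p i) (x i)).flatten (ofFn x) := by
  have := destutter_flatMap_replicate (L := ofFn fun i => (x i, p i))
    (by simpa [map_ofFn, Function.comp_def] using hx) (by simpa [mem_ofFn] using hp)
  simp only [flatMap_def, map_ofFn, Function.comp_def] at this
  rw [sameType, this, destutter_of_isChain _ _ hx]

def mark (s : Word) (c : Var) : Var := if c ∈ s then 1 else 0

theorem mark_eq_one_iff {s : Word} {c : Var} : mark s c = 1 ↔ c ∈ s := by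
  unfold mark; split_ifs <;> simp_all

theorem mark_eq_zero_iff {s : Word} {c : Var} : mark s c = 0 ↔ c ∉ s := by
  unfold mark; split_ifs <;> simp_all

theorem mark_eq_one_or_eq_zero (s : Word) (c : Var) : mark s c = 1 ∨ mark s c = 0 := by
  unfold mark; split_ifs <;> simp

theorem height_map_mark_le_three {X l₁ s l₂ : Word} (hX : X.Nodup) (h : X = l₁ ++ s ++ l₂) :
    height (X.map (mark s)) ≤ 3 := by
  subst h
  simp only [nodup_append, mem_append] at hX
  have h₁ : ∀ b ∈ l₁.map (mark s), b = 0 := by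
    simpa [mark_eq_zero_iff] using fun c hc hcs => hX.1.2.2 c hc c hcs rfl
  have hs : ∀ b ∈ s.map (mark s), b = 1 := by simp [mark_eq_one_iff]
  have h₂ : ∀ b ∈ l₂.map (mark s), b = 0 := by
    simpa [mark_eq_zero_iff] using fun c hc hcs => hX.2.2 c (Or.inr hcs) c hc rfl
  unfold height
  rw [map_append, map_append]
  calc _ ≤ _ := length_destutter_append_le _ _
    _ ≤ _ := Nat.add_le_add_right (length_destutter_append_le _ _) _
    _ ≤ 1 + 1 + 1 := Nat.add_le_add (Nat.add_le_add (length_destutter_le_one h₁)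
        (length_destutter_le_one hs)) (length_destutter_le_one h₂)

def MarksAgree (X v : Word) : Prop :=
  ∀ s : Word, height (X.map (mark s)) ≤ 3 → sameType (X.map (mark s)) (v.map (mark s))

namespace MarksAgree

variable {X v : Word}

theorem mem_iff (hX : X.Nodup) (H : MarksAgree X v) (c : Var) : c ∈ v ↔ c ∈ X := by
  constructor
  · intro hc
    have hXX := H X (height_map_mark_le_three (l₁ := []) (l₂ := []) hX (by simp))
    obtain ⟨c', hc', he⟩ := mem_map.mp (hXX.symm.mem (mem_map_of_mem (f := mark X) hc))
    rw [mark_eq_one_iff.mpr hc'] at he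
    exact mark_eq_one_iff.mp he.symm
  · intro hc
    obtain ⟨l₁, l₂, hsplit⟩ := append_of_mem hc
    have hXc := H [c] (height_map_mark_le_three (l₁ := l₁) (l₂ := l₂) hX (by simp [hsplit]))
    obtain ⟨c', hc', he⟩ := mem_map.mp (hXc.mem (mem_map_of_mem (f := mark [c]) hc))
    rw [mark_eq_one_iff.mpr (mem_singleton_self c), mark_eq_one_iff, mem_singleton] at he
    exact he ▸ hc'

theorem not_sublist (hX : X.Nodup) (H : MarksAgree X v) {A B : Word} (hAB : X = A ++ B)
    {a b : Var} (ha : a ∈ B) (hb : b ∈ A) : ¬[a, b] <+ v := by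
  intro hab
  have hdisj : ∀ c ∈ A, c ∉ B := fun c hcA hcB =>
    (nodup_append.mp (hAB ▸ hX)).2.2 c hcA c hcB rfl
  have h01 : [0, 1] <+ X.map (mark A) := by
    have hXA := H A (height_map_mark_le_three (l₁ := []) (l₂ := B) hX (by simp [hAB]))
    refine hXA.symm.sublist_of_isChain (by simp) ?_
    simpa [mark_eq_zero_iff.mpr fun h => hdisj a h ha, mark_eq_one_iff.mpr hb] using
      hab.map (mark A)
  have hA : ∀ p ∈ A.map (mark A), p = 1 := by simp [mark_eq_one_iff]
  have hB : ∀ q ∈ B.map (mark A), q = 0 := by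
    simpa [mark_eq_zero_iff] using fun c hcB hcA => hdisj c hcA hcB
  have hpair : (X.map (mark A)).Pairwise fun p q => p = 0 → q = 0 := by
    rw [hAB, map_append, pairwise_append]
    exact ⟨pairwise_of_forall_mem_list fun p hp _ _ h0 => absurd (hA p hp ▸ h0) one_ne_zero,
      pairwise_of_forall_mem_list fun _ _ q hq _ => hB q hq, fun _ _ q hq _ => hB q hq⟩
  exact one_ne_zero (pairwise_iff_forall_sublist.mp hpair h01 rfl)

theorem pairwise_idxOf (hX : X.Nodup) (H : MarksAgree X v) :
    v.Pairwise fun a b => X.idxOf a < X.idxOf b ∨ a = b := by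
  refine pairwise_iff_forall_sublist.mpr fun {a b} hab => ?_
  have haX := (H.mem_iff hX a).mp (hab.subset (by simp))
  have hbX := (H.mem_iff hX b).mp (hab.subset (by simp))
  rcases lt_trichotomy (X.idxOf a) (X.idxOf b) with h | h | h
  · exact Or.inl h
  · exact Or.inr ((idxOf_inj haX).mp h)
  · exfalso
    set k := X.idxOf b + 1
    have haTake : a ∉ X.take k := fun hA => by
      have : X.idxOf a < k := by
        rw [← take_append_drop k X, idxOf_append_of_mem hA]
        exact (idxOf_lt_length_iff.mpr hA).trans_le (length_take_le _ _)
      omega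
    have hbTake : b ∈ X.take k :=
      mem_take_iff_getElem.mpr ⟨X.idxOf b, by simp [k, idxOf_lt_length_iff.mpr hbX],
        getElem_idxOf _⟩
    have haDrop : a ∈ X.drop k := by
      rw [← take_append_drop k X, mem_append] at haX
      exact haX.resolve_left haTake
    exact H.not_sublist hX (take_append_drop k X).symm haDrop hbTake hab

end MarksAgree

theorem sameType_of_marksAgree {X v : Word} (hX : X.Nodup) (H : MarksAgree X v) :
    sameType X v := by
  let r : Var → Var → Prop := fun a b => X.idxOf a < X.idxOf b ∨ a = b
  have : Std.Antisymm r := ⟨fun a b hab hba => by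
    rcases hab with hab | hab
    · rcases hba with hba | hba
      · omega
      · exact hba.symm
    · exact hab⟩
  have hv : v.Pairwise r := H.pairwise_idxOf hX
  unfold sameType
  rw [destutter_of_isChain _ _ (Pairwise.isChain hX), hv.destutter_eq_dedup]
  exact Perm.eq_of_pairwise' (hX.pairwise_idxOf_lt.imp Or.inl) (hv.sublist (dedup_sublist v))
    ((perm_ext_iff_of_nodup hX (nodup_dedup v)).mpr fun c => by rw [mem_dedup, H.mem_iff hX])

/-- a word in which every variable forms exactly one island can
form an identity of a semigroup with Property (C₃) only with a word of the
same type. -/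
theorem stmt12 (S : Type) [Semigroup S] (hC3 : SPropC S 3) (u : Word)
    (h : ∃ (r : ℕ) (x : Fin r → Var) (p : Fin r → ℕ), 0 < r ∧
      Function.Injective x ∧ (∀ i, 0 < p i) ∧
      u = (List.ofFn fun i => List.replicate (p i) (x i)).flatten) :
    ∀ v : Word, SSat S u v → sameType u v := by
  obtain ⟨r, x, p, hr, hx, hp, rfl⟩ := h
  intro v hv
  have hX : (ofFn x).Nodup := nodup_ofFn.mpr hx
  have huX := sameType_flatten_ofFn_replicate (Pairwise.isChain hX) hp
  have hu : (ofFn fun i => replicate (p i) (x i)).flatten ≠ [] := fun h0 => by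
    rw [h0, sameType, destutter_nil, eq_comm, destutter_eq_nil, ofFn_eq_nil_iff] at huX
    omega
  refine huX.trans (sameType_of_marksAgree hX fun s hs => ?_)
  exact (huX.map (mark s)).symm.trans (hC3.sameType_map hv hu one_ne_zero
    (mark_eq_one_or_eq_zero s) ((huX.map (mark s)).height_eq.trans_le hs))
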